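/- arXiv:1407.4018 — 2 statements merged into one kernel-verified Lean document; each statement's English description precedes it below -/
import Mathlib

section
/- Let X be a complex lush Banach space. Then the Lipschitz numerical index of X satisfies n_L(X) = 1; equivalently, every Lipschitz map T: X → X satisfies v(T) = ‖T‖, where ‖T‖ is the Lipschitz seminorm of T. -/
open Set Metric Topology

/-- The Lipschitz seminorm `‖f‖ = sup { ‖f x₁ - f x₂‖ / ‖x₁ - x₂‖ : x₁ ≠ x₂ }`. -/
noncomputable def lipSemi {X Y : Type*} [NormedAddCommGroup X] [NormedAddCommGroup Y]
    (f : X → Y) : ℝ :=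
  sSup {r : ℝ | ∃ x₁ x₂ : X, x₁ ≠ x₂ ∧ r = ‖f x₁ - f x₂‖ / ‖x₁ - x₂‖}

/-- The Lip-slice `S(S_X, f, ε)` of the unit sphere generated by a Lipschitz
functional `f : X → ℝ` and `ε > 0`. -/
def lipSlice {X : Type*} [NormedAddCommGroup X] [NormedSpace ℝ X]
    (f : X → ℝ) (ε : ℝ) : Set X :=
  {z | ∃ x₁ x₂ : X, x₁ ≠ x₂ ∧ z = ‖x₁ - x₂‖⁻¹ • (x₁ - x₂) ∧
    lipSemi f - ε < (f x₁ - f x₂) / ‖x₁ - x₂‖}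

/-- `S` is a Lip-slice of the unit sphere of `X`. -/
def IsLipSlice {X : Type*} [NormedAddCommGroup X] [NormedSpace ℝ X] (S : Set X) : Prop :=
  ∃ (f : X → ℝ) (ε : ℝ), (∃ C, LipschitzWith C f) ∧ (∃ x y : X, f x ≠ f y) ∧ 0 < ε ∧
    S = lipSlice f ε

/-- A rank-one bounded linear operator: `T = g(·) • u`. -/
def RankOne (𝕜 : Type*) [RCLike 𝕜] {X : Type*} [NormedAddCommGroup X] [NormedSpace 𝕜 X]
    (T : X →L[𝕜] X) : Prop :=
  ∃ (g : X →L[𝕜] 𝕜) (u : X), ∀ x, T x = g x • u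

/-- The Daugavet property: every rank-one operator satisfies `‖Id + T‖ = 1 + ‖T‖`. -/
def DaugavetProperty (𝕜 : Type*) [RCLike 𝕜] (X : Type*) [NormedAddCommGroup X]
    [NormedSpace 𝕜 X] : Prop :=
  ∀ T : X →L[𝕜] X, RankOne 𝕜 T → ‖ContinuousLinearMap.id 𝕜 X + T‖ = 1 + ‖T‖

/-- The alternative Daugavet property: every rank-one operator satisfies
`max_{θ ∈ 𝕋} ‖Id + θT‖ = 1 + ‖T‖`. -/
def AltDaugavetProperty (𝕜 : Type*) [RCLike 𝕜] (X : Type*) [NormedAddCommGroup X]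
    [NormedSpace 𝕜 X] : Prop :=
  ∀ T : X →L[𝕜] X, RankOne 𝕜 T →
    IsGreatest {r : ℝ | ∃ θ : 𝕜, ‖θ‖ = 1 ∧ r = ‖ContinuousLinearMap.id 𝕜 X + θ • T‖}
      (1 + ‖T‖)

/-- `S` is a slice of the set `A`: a nonempty set of the form `{x ∈ A | Re f x > α}`
with `f` a nonzero continuous linear functional. -/
def IsSlice (𝕜 : Type*) [RCLike 𝕜] {X : Type*} [NormedAddCommGroup X] [NormedSpace 𝕜 X]
    (A S : Set X) : Prop :=
  S.Nonempty ∧ ∃ (f : X →L[𝕜] 𝕜) (α : ℝ), f ≠ 0 ∧ S = {x ∈ A | α < RCLike.re (f x)}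

/-- Slicely countably determined set. -/
def IsSCD (𝕜 : Type*) [RCLike 𝕜] {X : Type*} [NormedAddCommGroup X] [NormedSpace 𝕜 X]
    [NormedSpace ℝ X] (A : Set X) : Prop :=
  ∃ S : ℕ → Set X, (∀ n, IsSlice 𝕜 A (S n)) ∧
    ∀ B ⊆ A, (∀ n, (B ∩ S n).Nonempty) → A ⊆ closure (convexHull ℝ B)

/-- The slope set of a map `T : X → X`. -/
def lipSlope {X : Type*} [NormedAddCommGroup X] [NormedSpace ℝ X] (T : X → X) : Set X :=
  {z | ∃ x₁ x₂ : X, x₁ ≠ x₂ ∧ z = ‖x₁ - x₂‖⁻¹ • (T x₁ - T x₂)}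

/-- `K(X*)`: the intersection of the dual unit sphere with the weak*-closure of the
set of extreme points of the dual unit ball, as a subset of the weak* dual. -/
noncomputable def Kdual (𝕜 : Type*) [RCLike 𝕜] (X : Type*) [NormedAddCommGroup X]
    [NormedSpace 𝕜 X] : Set (WeakDual 𝕜 X) :=
  {φ | ‖WeakDual.toStrongDual φ‖ = 1} ∩
    closure (WeakDual.toStrongDual ⁻¹'
      Set.extremePoints ℝ (closedBall (0 : StrongDual 𝕜 X) 1))

/-- `D(S, ε) = {x* ∈ K(X*) : ∃ y ∈ S, Re x*(y) > 1 - ε}`. -/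
def Dset (𝕜 : Type*) [RCLike 𝕜] {X : Type*} [NormedAddCommGroup X] [NormedSpace 𝕜 X]
    (S : Set X) (ε : ℝ) : Set ↥(Kdual 𝕜 X) :=
  {φ | ∃ y ∈ S, 1 - ε < RCLike.re ((φ : WeakDual 𝕜 X) y)}

/-- `D̃(S, ε) = {x* ∈ K(X*) : ∃ y ∈ S, |x*(y)| > 1 - ε}`. -/
def DsetAbs (𝕜 : Type*) [RCLike 𝕜] {X : Type*} [NormedAddCommGroup X] [NormedSpace 𝕜 X]
    (S : Set X) (ε : ℝ) : Set ↥(Kdual 𝕜 X) :=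
  {φ | ∃ y ∈ S, 1 - ε < ‖(φ : WeakDual 𝕜 X) y‖}

/-- A set is dentable if it admits slices of arbitrarily small diameter. -/
def Dentable (𝕜 : Type*) [RCLike 𝕜] {X : Type*} [NormedAddCommGroup X] [NormedSpace 𝕜 X]
    (B : Set X) : Prop :=
  ∀ ε : ℝ, 0 < ε → ∃ S : Set X, IsSlice 𝕜 B S ∧ diam S < ε

/-- A sequence equivalent to the unit vector basis of `ℓ₁`. -/
def IsL1Seq (𝕜 : Type*) [RCLike 𝕜] {X : Type*} [NormedAddCommGroup X] [NormedSpace 𝕜 X]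
    (x : ℕ → X) : Prop :=
  ∃ C : ℝ, 1 ≤ C ∧ ∀ (n : ℕ) (a : ℕ → 𝕜),
    C⁻¹ * (∑ k ∈ Finset.range n, ‖a k‖) ≤ ‖∑ k ∈ Finset.range n, a k • x k‖ ∧
    ‖∑ k ∈ Finset.range n, a k • x k‖ ≤ C * (∑ k ∈ Finset.range n, ‖a k‖)

/-- Numerical radius of a bounded linear operator. -/
noncomputable def numRadius (𝕜 : Type*) [RCLike 𝕜] {X : Type*} [NormedAddCommGroup X]
    [NormedSpace 𝕜 X] (T : X →L[𝕜] X) : ℝ :=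
  sSup {r : ℝ | ∃ (x : X) (f : X →L[𝕜] 𝕜), ‖x‖ = 1 ∧ ‖f‖ = 1 ∧ f x = 1 ∧ r = ‖f (T x)‖}

/-- Numerical index of a Banach space. -/
noncomputable def numIndex (𝕜 : Type*) [RCLike 𝕜] (X : Type*) [NormedAddCommGroup X]
    [NormedSpace 𝕜 X] : ℝ :=
  sInf {r : ℝ | ∃ T : X →L[𝕜] X, ‖T‖ = 1 ∧ r = numRadius 𝕜 T}

/-- Numerical radius of a Lipschitz map. -/
noncomputable def lipNumRadius (𝕜 : Type*) [RCLike 𝕜] {X : Type*} [NormedAddCommGroup X]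
    [NormedSpace 𝕜 X] (T : X → X) : ℝ :=
  sSup {r : ℝ | ∃ (x y : X) (f : X →L[𝕜] 𝕜), x ≠ y ∧
    RCLike.re (f (x - y)) = ‖f‖ * ‖x - y‖ ∧ ‖f‖ * ‖x - y‖ = ‖x - y‖ ^ 2 ∧
    r = ‖f (T x - T y)‖ / ‖x - y‖ ^ 2}

/-- The Lipschitz numerical index of a Banach space. -/
noncomputable def lipNumIndex (𝕜 : Type*) [RCLike 𝕜] (X : Type*) [NormedAddCommGroup X]
    [NormedSpace 𝕜 X] : ℝ :=
  sInf {r : ℝ | ∃ T : X → X, (∃ C, LipschitzWith C T) ∧ lipSemi T = 1 ∧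
    r = lipNumRadius 𝕜 T}

/-- The slice `S(S_X, Re f, ε)` of the unit sphere given by a linear functional. -/
def sphereSlice (𝕜 : Type*) [RCLike 𝕜] {X : Type*} [NormedAddCommGroup X]
    [NormedSpace 𝕜 X] (f : X →L[𝕜] 𝕜) (ε : ℝ) : Set X :=
  {z | ‖z‖ = 1 ∧ 1 - ε < RCLike.re (f z)}

/-- `𝕋 • S`, the set of rotations of elements of `S` by unimodular scalars. -/
def circleSmul (𝕜 : Type*) [RCLike 𝕜] {X : Type*} [NormedAddCommGroup X]
    [NormedSpace 𝕜 X] (S : Set X) : Set X :=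
  {w | ∃ (θ : 𝕜) (z : X), ‖θ‖ = 1 ∧ z ∈ S ∧ w = θ • z}

/-- Lushness of a Banach space. -/
def Lush (𝕜 : Type*) [RCLike 𝕜] (X : Type*) [NormedAddCommGroup X] [NormedSpace 𝕜 X]
    [NormedSpace ℝ X] : Prop :=
  ∀ x y : X, ‖x‖ = 1 → ‖y‖ = 1 → ∀ ε : ℝ, 0 < ε → ∃ f : X →L[𝕜] 𝕜, ‖f‖ = 1 ∧
    y ∈ sphereSlice 𝕜 f ε ∧
    infDist x (convexHull ℝ (circleSmul 𝕜 (sphereSlice 𝕜 f ε))) < ε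


/-!
The inequality `v(T) ≤ ‖T‖` is immediate. Conversely, fix `x₁ ≠ x₂` and let `u`, `w` be the
normalised differences `x₁ - x₂` and `T x₁ - T x₂`. Lushness gives a unit functional `f` with
`Re f w > 1 - ε` and a convex combination of rotated points of the slice `S(f, ε)` that is
`ε`-close to `u`. By the Bishop–Phelps–Bollobás theorem, a consequence of Ekeland's variational
principle and a Hahn–Banach sandwich, each of these points is `2√ε`-close to a direction `d` at
which a unit functional `g`, `√ε`-close to `f`, attains its norm, and for such pairs
`‖g (T (p + s • d) - T p)‖ ≤ s v(T)` straight from the definition of `v`. Walking from `x₂` to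
`x₁` along these directions gives `‖T x₁ - T x₂‖ (1 - ε) ≤ ‖x₁ - x₂‖ (v(T) + O(√ε))`.
-/

open Filter

section Ekeland

variable {α : Type*} [PseudoMetricSpace α] {φ : α → ℝ} {c : ℝ}

lemma exists_le_add_dist_forall_le_add (hb : BddBelow (range φ)) (x : α) {δ : ℝ} (hδ : 0 < δ) :
    ∃ z, φ z + c * dist z x ≤ φ x ∧
      ∀ z', φ z' + c * dist z' x ≤ φ x → φ z ≤ φ z' + δ := by
  set S := φ '' {z | φ z + c * dist z x ≤ φ x}
  have hxS : φ x ∈ S := ⟨x, by simp, rfl⟩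
  have hSb : BddBelow S := hb.mono (image_subset_range _ _)
  obtain ⟨_, ⟨z, hz, rfl⟩, hzδ⟩ :=
    exists_lt_of_csInf_lt ⟨_, hxS⟩ (lt_add_of_pos_right (sInf S) hδ)
  exact ⟨z, hz, fun z' hz' => by linarith [csInf_le hSb ⟨z', hz', rfl⟩]⟩

lemma cauchySeq_of_le_add_dist {u : ℕ → α} (hb : BddBelow (range (φ ∘ u))) (hc : 0 < c)
    (hu : ∀ n m, n ≤ m → φ (u m) + c * dist (u m) (u n) ≤ φ (u n)) : CauchySeq u := by
  have hanti : Antitone (φ ∘ u) := fun n m hnm => show φ (u m) ≤ φ (u n) by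
    nlinarith [hu n m hnm, dist_nonneg (x := u m) (y := u n)]
  set L := ⨅ n, φ (u n)
  have hL : Tendsto (φ ∘ u) atTop (𝓝 L) := tendsto_atTop_ciInf hanti hb
  have hLle : ∀ n, L ≤ φ (u n) := ciInf_le hb
  refine cauchySeq_of_le_tendsto_0 (fun N => 2 * (φ (u N) - L) / c) (fun n m N hn hm => ?_) ?_
  · rw [le_div_iff₀ hc]
    nlinarith [dist_triangle_right (u n) (u m) (u N), hu N n hn, hu N m hm, hLle n, hLle m]
  · simpa using ((hL.sub_const L).const_mul 2).div_const c

/-- **Ekeland's variational principle**. -/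
theorem exists_le_forall_le_add_dist [CompleteSpace α] (hφ : Continuous φ)
    (hb : BddBelow (range φ)) (hc : 0 < c) (x₀ : α) :
    ∃ y, φ y + c * dist y x₀ ≤ φ x₀ ∧ ∀ z, φ y ≤ φ z + c * dist z y := by
  have below_trans : ∀ {x y z : α}, φ z + c * dist z y ≤ φ y → φ y + c * dist y x ≤ φ x →
      φ z + c * dist z x ≤ φ x := fun {x y z} hzy hyx => by
    nlinarith [dist_triangle z y x]
  choose next hnext_le hnext_min using fun (n : ℕ) x =>
    exists_le_add_dist_forall_le_add hb x (pow_pos (one_half_pos (α := ℝ)) n)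
  let u : ℕ → α := fun n => Nat.rec x₀ (fun n x => next n x) n
  have hbelow : ∀ n m, n ≤ m → φ (u m) + c * dist (u m) (u n) ≤ φ (u n) := by
    intro n m hnm
    induction m, hnm using Nat.le_induction with
    | base => simp
    | succ m _ ih => exact below_trans (hnext_le m (u m)) ih
  obtain ⟨y, hy⟩ := cauchySeq_tendsto_of_complete <|
    cauchySeq_of_le_add_dist (hb.mono (range_comp_subset_range _ _)) hc hbelow
  have hyu : ∀ n, φ y + c * dist y (u n) ≤ φ (u n) := fun n =>
    le_of_tendsto ((hφ.tendsto y |>.comp hy).add ((hy.dist tendsto_const_nhds).const_mul c))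
      (eventually_atTop.2 ⟨n, fun m hm => hbelow n m hm⟩)
  refine ⟨y, hyu 0, fun z => ?_⟩
  by_contra! hz
  have hyz : φ y ≤ φ z := by
    have hpow : Tendsto (fun n : ℕ => φ z + (1 / 2 : ℝ) ^ n) atTop (𝓝 (φ z)) := by
      simpa using tendsto_const_nhds.add
        (tendsto_pow_atTop_nhds_zero_of_lt_one (by norm_num) (by norm_num : (1 / 2 : ℝ) < 1))
    refine ge_of_tendsto' hpow fun n => ?_
    nlinarith [hyu (n + 1), dist_nonneg (x := y) (y := u (n + 1)),
      hnext_min n (u n) z (below_trans hz.le (hyu n))]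
  nlinarith [dist_nonneg (x := z) (y := y)]

end Ekeland

theorem exists_linearMap_le_sublinear_eq {E : Type*} [AddCommGroup E] [Module ℝ E] (N : E → ℝ)
    (N_hom : ∀ c : ℝ, 0 < c → ∀ x, N (c • x) = c * N x) (N_add : ∀ x y, N (x + y) ≤ N x + N y)
    (x : E) : ∃ g : E →ₗ[ℝ] ℝ, g x = N x ∧ ∀ y, g y ≤ N y := by
  have N_zero : N 0 = 0 := by
    have := N_hom 2 two_pos 0
    rw [smul_zero] at this
    linarith
  have hspan : ∀ c : ℝ, c • x = 0 → (RingHom.id ℝ) c • N x = 0 := by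
    intro c hc
    rcases smul_eq_zero.1 hc with rfl | rfl
    · simp
    · simp [N_zero]
  have hle : ∀ y : (LinearPMap.mkSpanSingleton' x (N x) hspan).domain,
      LinearPMap.mkSpanSingleton' x (N x) hspan y ≤ N y := by
    rintro ⟨_, hy⟩
    obtain ⟨c, rfl⟩ := Submodule.mem_span_singleton.1 hy
    rw [LinearPMap.mkSpanSingleton'_apply, RingHom.id_apply, smul_eq_mul]
    rcases lt_trichotomy c 0 with hc | rfl | hc
    · have := N_add ((-c) • x) (c • x)
      rw [← add_smul, neg_add_cancel, zero_smul, N_zero, N_hom (-c) (neg_pos.2 hc)] at this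
      linarith
    · simp [N_zero]
    · rw [N_hom c hc]
  obtain ⟨g, hg, hgN⟩ := exists_extension_of_le_sublinear _ N N_hom N_add hle
  exact ⟨g, (hg ⟨x, Submodule.mem_span_singleton_self x⟩).trans
    (LinearPMap.mkSpanSingleton'_apply_self _ _ _ _), hgN⟩

section InfConvolution

variable {E : Type*} [NormedAddCommGroup E] [NormedSpace ℝ E] {F : StrongDual ℝ E} {c : ℝ}

/-- The infimal convolution of `‖·‖` and `F + c‖·‖`: the largest sublinear function below both. -/
noncomputable def infConvNorm (F : StrongDual ℝ E) (c : ℝ) (w : E) : ℝ :=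
  ⨅ b, ‖w - b‖ + (F b + c * ‖b‖)

lemma infConvNorm_le (hF : ∀ b, -‖b‖ ≤ F b + c * ‖b‖) (w b : E) :
    infConvNorm F c w ≤ ‖w - b‖ + (F b + c * ‖b‖) :=
  ciInf_le ⟨-‖w‖, forall_mem_range.2 fun b => by
    linarith [hF b, norm_sub_norm_le b w, norm_sub_rev w b]⟩ b

lemma le_infConvNorm {w : E} {a : ℝ} (h : ∀ b, a ≤ ‖w - b‖ + (F b + c * ‖b‖)) :
    a ≤ infConvNorm F c w :=
  le_ciInf h

lemma infConvNorm_smul_le (hF : ∀ b, -‖b‖ ≤ F b + c * ‖b‖) {r : ℝ} (hr : 0 < r) (w : E) :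
    infConvNorm F c (r • w) ≤ r * infConvNorm F c w := by
  rw [← div_le_iff₀' hr]
  refine le_infConvNorm fun b => (div_le_iff₀' hr).2 ?_
  calc infConvNorm F c (r • w) ≤ ‖r • w - r • b‖ + (F (r • b) + c * ‖r • b‖) :=
        infConvNorm_le hF _ _
    _ = r * (‖w - b‖ + (F b + c * ‖b‖)) := by
        simp only [← smul_sub, norm_smul, map_smul, Real.norm_of_nonneg hr.le, smul_eq_mul]
        ring

lemma infConvNorm_smul (hF : ∀ b, -‖b‖ ≤ F b + c * ‖b‖) {r : ℝ} (hr : 0 < r) (w : E) :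
    infConvNorm F c (r • w) = r * infConvNorm F c w := by
  refine le_antisymm (infConvNorm_smul_le hF hr w) ?_
  have := infConvNorm_smul_le hF (inv_pos.2 hr) (r • w)
  rwa [inv_smul_smul₀ hr.ne', ← div_eq_inv_mul, le_div_iff₀' hr] at this

lemma infConvNorm_add_le (hc : 0 ≤ c) (hF : ∀ b, -‖b‖ ≤ F b + c * ‖b‖) (x y : E) :
    infConvNorm F c (x + y) ≤ infConvNorm F c x + infConvNorm F c y := by
  have key : ∀ b₁ b₂, infConvNorm F c (x + y) ≤
      ‖x - b₁‖ + (F b₁ + c * ‖b₁‖) + (‖y - b₂‖ + (F b₂ + c * ‖b₂‖)) := fun b₁ b₂ => by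
    refine (infConvNorm_le hF _ (b₁ + b₂)).trans ?_
    rw [show x + y - (b₁ + b₂) = (x - b₁) + (y - b₂) by abel, map_add]
    linarith [norm_add_le (x - b₁) (y - b₂), mul_le_mul_of_nonneg_left (norm_add_le b₁ b₂) hc]
  have h₁ : ∀ b₁, infConvNorm F c (x + y) - (‖x - b₁‖ + (F b₁ + c * ‖b₁‖)) ≤
      infConvNorm F c y := fun b₁ => le_infConvNorm fun b₂ => by linarith [key b₁ b₂]
  have h₂ : infConvNorm F c (x + y) - infConvNorm F c y ≤ infConvNorm F c x :=
    le_infConvNorm fun b₁ => by linarith [h₁ b₁]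
  linarith

end InfConvolution

section BishopPhelpsBollobas

variable {E : Type*} [NormedAddCommGroup E]

theorem exists_norm_le_one_apply_eq_norm_sub_le [NormedSpace ℝ E] (F : StrongDual ℝ E) (y₀ : E)
    {c : ℝ} (hc : 0 ≤ c) (hF : ∀ v, F v ≤ ‖y₀ + v‖ - ‖y₀‖ + c * ‖v‖) :
    ∃ G : StrongDual ℝ E, ‖G‖ ≤ 1 ∧ G y₀ = ‖y₀‖ ∧ ‖G - F‖ ≤ c := by
  have hF' : ∀ b, ‖y₀‖ - c * ‖b‖ ≤ ‖y₀ - b‖ + F b := fun b => by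
    have := hF (-b)
    rw [map_neg, norm_neg, ← sub_eq_add_neg] at this
    linarith
  have hFb : ∀ b, -‖b‖ ≤ F b + c * ‖b‖ := fun b => by linarith [hF' b, norm_sub_le y₀ b]
  obtain ⟨g, hgy₀, hgN⟩ := exists_linearMap_le_sublinear_eq (infConvNorm F c)
    (fun r hr => infConvNorm_smul hFb hr) (infConvNorm_add_le hc hFb) y₀
  have hg_norm : ∀ w, g w ≤ ‖w‖ := fun w => by
    simpa using (hgN w).trans (infConvNorm_le hFb w 0)
  have hg_F : ∀ w, g w ≤ F w + c * ‖w‖ := fun w => by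
    simpa using (hgN w).trans (infConvNorm_le hFb w w)
  let G := g.mkContinuous 1 fun w => by
    have h := hg_norm (-w)
    rw [map_neg, norm_neg] at h
    rw [Real.norm_eq_abs, one_mul, abs_le]
    exact ⟨by linarith, hg_norm w⟩
  refine ⟨G, LinearMap.mkContinuous_norm_le _ zero_le_one _, ?_, ?_⟩
  · exact hgy₀.trans (le_antisymm (by simpa using infConvNorm_le hFb y₀ 0)
      (le_infConvNorm fun b => by linarith [hF' b]))
  · refine ContinuousLinearMap.opNorm_le_bound _ hc fun w => ?_
    have h := hg_F (-w)
    rw [map_neg, map_neg, norm_neg] at h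
    rw [sub_apply, Real.norm_eq_abs, abs_le]
    exact ⟨by change _ ≤ g w - F w; linarith, by change g w - F w ≤ _; linarith [hg_F w]⟩

lemma exists_norm_sub_le_forall_apply_le [NormedSpace ℝ E] [CompleteSpace E] {F : StrongDual ℝ E}
    (hF : ‖F‖ ≤ 1) (z : E) {c : ℝ} (hc : 0 < c) :
    ∃ y₀, ‖y₀ - z‖ ≤ (‖z‖ - F z) / c ∧ ∀ v, F v ≤ ‖y₀ + v‖ - ‖y₀‖ + c * ‖v‖ := by
  have hF_le : ∀ w, F w ≤ ‖w‖ := fun w =>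
    (le_abs_self _).trans ((F.le_opNorm w).trans (by nlinarith [norm_nonneg w]))
  obtain ⟨y₀, hy₀z, hy₀⟩ := exists_le_forall_le_add_dist (φ := fun w => ‖w‖ - F w)
    (by fun_prop) ⟨0, forall_mem_range.2 fun w => by linarith [hF_le w]⟩ hc z
  refine ⟨y₀, ?_, fun v => ?_⟩
  · rw [le_div_iff₀' hc, ← dist_eq_norm]
    linarith [hF_le y₀]
  · have := hy₀ (y₀ + v)
    rw [map_add, dist_eq_norm, add_sub_cancel_left] at this
    linarith

lemma norm_normalize_sub_le [NormedSpace ℝ E] {z : E} (hz : ‖z‖ = 1) (y : E) :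
    ‖NormedSpace.normalize y - z‖ ≤ 2 * ‖y - z‖ := by
  rcases eq_or_ne y 0 with rfl | hy
  · simp [hz]
  have hy' : 0 < ‖y‖ := norm_pos_iff.2 hy
  have hyy : ‖NormedSpace.normalize y - y‖ = |1 - ‖y‖| := calc
    _ = |‖y‖⁻¹ - 1| * ‖y‖ := by
      have h : ‖y‖⁻¹ • y - y = (‖y‖⁻¹ - 1) • y := by rw [sub_smul, one_smul]
      rw [NormedSpace.normalize, h, norm_smul, Real.norm_eq_abs]
    _ = |(‖y‖⁻¹ - 1) * ‖y‖| := by rw [abs_mul, abs_of_pos hy']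
    _ = |1 - ‖y‖| := by rw [sub_mul, inv_mul_cancel₀ hy'.ne', one_mul]
  have hyz : |1 - ‖y‖| ≤ ‖y - z‖ := by
    rw [← hz, norm_sub_rev]; exact abs_norm_sub_norm_le z y
  linarith [norm_sub_le_norm_sub_add_norm_sub (NormedSpace.normalize y) y z]

/-- **Bishop–Phelps–Bollobás theorem**. -/
theorem exists_norming_pair_near {𝕜 : Type*} [RCLike 𝕜] [NormedSpace 𝕜 E] [NormedSpace ℝ E]
    [IsScalarTower ℝ 𝕜 E] [CompleteSpace E] {f : StrongDual 𝕜 E} (hf : ‖f‖ ≤ 1) {z : E}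
    (hz : ‖z‖ = 1) {ε c : ℝ} (hfz : 1 - RCLike.re (f z) < ε) (hεc : ε < c) :
    ∃ (g : StrongDual 𝕜 E) (y : E), ‖g‖ = 1 ∧ ‖y‖ = 1 ∧ g y = 1 ∧ ‖g - f‖ ≤ c ∧
      ‖y - z‖ ≤ 2 * ε / c := by
  set F : StrongDual ℝ E := StrongDual.extendRCLikeₗᵢ.symm f
  have hFf : ∀ w, F w = RCLike.re (f w) := fun w => by
    simp [F, StrongDual.extendRCLikeₗᵢ_symm_apply]
  have hFz : F z ≤ 1 := by
    rw [hFf, ← hz]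
    exact (RCLike.re_le_norm _).trans ((f.le_opNorm z).trans (by nlinarith [norm_nonneg z]))
  have hc : 0 < c := by linarith [hFf z]
  have hF : ‖F‖ ≤ 1 := (LinearIsometryEquiv.norm_map _ f).trans_le hf
  obtain ⟨y₀, hy₀z, hy₀⟩ := exists_norm_sub_le_forall_apply_le hF z hc
  rw [hz, hFf] at hy₀z
  have hy₀z' : ‖y₀ - z‖ ≤ ε / c := hy₀z.trans (by gcongr)
  have hy₀0 : y₀ ≠ 0 := by
    rintro rfl
    rw [zero_sub, norm_neg, hz, le_div_iff₀' hc, mul_one] at hy₀z'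
    linarith
  obtain ⟨G, hG, hGy₀, hGF⟩ := exists_norm_le_one_apply_eq_norm_sub_le F y₀ hc.le hy₀
  set g : StrongDual 𝕜 E := StrongDual.extendRCLikeₗᵢ G
  set y := NormedSpace.normalize y₀
  have hg : ‖g‖ ≤ 1 := by rwa [LinearIsometryEquiv.norm_map]
  have hy : ‖y‖ = 1 := NormedSpace.norm_normalize_eq_one_iff.2 hy₀0
  have hgy_re : RCLike.re (g y) = 1 := by
    rw [show y = ‖y₀‖⁻¹ • y₀ from rfl, ContinuousLinearMap.map_smul_of_tower, RCLike.smul_re,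
      show g = StrongDual.extendRCLikeₗᵢ G from rfl, StrongDual.extendRCLikeₗᵢ_apply,
      StrongDual.re_extendRCLike_apply, hGy₀, inv_mul_cancel₀ (norm_ne_zero_iff.2 hy₀0)]
  have hgy : g y = 1 := by
    have h1 : ‖g y‖ ≤ 1 := (g.le_opNorm y).trans (by rw [hy, mul_one]; exact hg)
    rw [← RCLike.re_eq_self_of_le (h1.trans hgy_re.ge), hgy_re, RCLike.ofReal_one]
  refine ⟨g, y, le_antisymm hg ?_, hy, hgy, ?_, ?_⟩
  · simpa [hgy, hy] using g.le_opNorm y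
  · rwa [← LinearIsometryEquiv.apply_symm_apply StrongDual.extendRCLikeₗᵢ f, ← map_sub,
      LinearIsometryEquiv.norm_map]
  · calc ‖y - z‖ ≤ 2 * ‖y₀ - z‖ := norm_normalize_sub_le hz y₀
      _ ≤ 2 * ε / c := by rw [mul_div_assoc]; linarith

end BishopPhelpsBollobas

section LipschitzSeminorm

variable {X Y : Type*} [NormedAddCommGroup X] [NormedAddCommGroup Y]

lemma lipSemi_nonneg (f : X → Y) : 0 ≤ lipSemi f :=
  Real.sSup_nonneg <| by rintro r ⟨x₁, x₂, -, rfl⟩; positivity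

lemma LipschitzWith.norm_sub_le_lipSemi_mul {C : NNReal} {f : X → Y} (hf : LipschitzWith C f)
    (a b : X) : ‖f a - f b‖ ≤ lipSemi f * ‖a - b‖ := by
  rcases eq_or_ne a b with rfl | hab
  · simp
  rw [← div_le_iff₀ (norm_pos_iff.2 (sub_ne_zero.2 hab))]
  refine le_csSup ⟨C, ?_⟩ ⟨a, b, hab, rfl⟩
  rintro r ⟨x₁, x₂, -, rfl⟩
  exact div_le_of_le_mul₀ (norm_nonneg _) C.2 (by simpa [dist_eq_norm] using hf.dist_le_mul x₁ x₂)

lemma lipSemi_id [Nontrivial X] : lipSemi (id : X → X) = 1 := by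
  have : {r : ℝ | ∃ x₁ x₂ : X, x₁ ≠ x₂ ∧ r = ‖id x₁ - id x₂‖ / ‖x₁ - x₂‖} = {1} := by
    ext r
    constructor
    · rintro ⟨x₁, x₂, hx, rfl⟩
      exact div_self (norm_ne_zero_iff.2 (sub_ne_zero.2 hx))
    · rintro rfl
      obtain ⟨x₁, x₂, hx⟩ := exists_pair_ne X
      exact ⟨x₁, x₂, hx, (div_self (norm_ne_zero_iff.2 (sub_ne_zero.2 hx))).symm⟩
  rw [lipSemi, this, csSup_singleton]

end LipschitzSeminorm

section LipschitzNumericalRadius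

variable {𝕜 X : Type*} [RCLike 𝕜] [NormedAddCommGroup X] [NormedSpace 𝕜 X] {T : X → X}
  {C : NNReal}

lemma lipNumRadius_nonneg (T : X → X) : 0 ≤ lipNumRadius 𝕜 T :=
  Real.sSup_nonneg <| by rintro r ⟨x, y, f, -, -, -, rfl⟩; positivity

lemma LipschitzWith.norm_apply_sub_div_le_lipSemi (hT : LipschitzWith C T) {x y : X}
    (hxy : x ≠ y) {f : StrongDual 𝕜 X} (hf : ‖f‖ * ‖x - y‖ = ‖x - y‖ ^ 2) :
    ‖f (T x - T y)‖ / ‖x - y‖ ^ 2 ≤ lipSemi T := by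
  have hd : 0 < ‖x - y‖ := norm_pos_iff.2 (sub_ne_zero.2 hxy)
  have hfn : ‖f‖ = ‖x - y‖ := mul_right_cancel₀ hd.ne' (by rw [hf, sq])
  rw [div_le_iff₀ (by positivity)]
  calc ‖f (T x - T y)‖ ≤ ‖f‖ * ‖T x - T y‖ := f.le_opNorm _
    _ ≤ ‖x - y‖ * (lipSemi T * ‖x - y‖) := by
        rw [hfn]; gcongr; exact hT.norm_sub_le_lipSemi_mul x y
    _ = lipSemi T * ‖x - y‖ ^ 2 := by ring

lemma LipschitzWith.lipNumRadius_le_lipSemi (hT : LipschitzWith C T) :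
    lipNumRadius 𝕜 T ≤ lipSemi T :=
  Real.sSup_le (fun _ ⟨_, _, _, hxy, _, hf, hr⟩ => hr ▸ hT.norm_apply_sub_div_le_lipSemi hxy hf)
    (lipSemi_nonneg T)

variable [NormedSpace ℝ X] [IsScalarTower ℝ 𝕜 X]

/-- Rescaling `g` by `s • conj (g d)` turns `(p + s • d, p)` into a pair admissible in the
definition of `lipNumRadius`. -/
lemma LipschitzWith.norm_apply_sub_le_mul_lipNumRadius (hT : LipschitzWith C T)
    {g : StrongDual 𝕜 X} {d : X} (hg : ‖g‖ = 1) (hd : ‖d‖ = 1) (hgd : ‖g d‖ = 1) (p : X)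
    {s : ℝ} (hs : 0 ≤ s) : ‖g (T (p + s • d) - T p)‖ ≤ s * lipNumRadius 𝕜 T := by
  rcases hs.eq_or_lt with rfl | hs
  · simp
  set h : StrongDual 𝕜 X := ((s : 𝕜) * starRingEnd 𝕜 (g d)) • g
  have hsd : p + s • d - p = s • d := add_sub_cancel_left p _
  have hnorm : ‖p + s • d - p‖ = s := by rw [hsd, norm_smul, hd, mul_one, Real.norm_of_nonneg hs.le]
  have hh : ‖h‖ = s := by
    rw [norm_smul, norm_mul, RCLike.norm_conj, hgd, hg, RCLike.norm_ofReal, abs_of_pos hs]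
    ring
  have hhd : h (p + s • d - p) = ((s ^ 2 : ℝ) : 𝕜) := by
    have hca : starRingEnd 𝕜 (g d) * g d = 1 := by rw [RCLike.conj_mul, hgd]; simp
    rw [hsd, smul_apply, ContinuousLinearMap.map_smul_of_tower, RCLike.real_smul_eq_coe_mul,
      smul_eq_mul]
    push_cast
    linear_combination (s : 𝕜) ^ 2 * hca
  have hmem : ‖h (T (p + s • d) - T p)‖ / ‖p + s • d - p‖ ^ 2 ≤ lipNumRadius 𝕜 T :=
    le_csSup ⟨lipSemi T, ?_⟩ ⟨p + s • d, p, h, ?_, ?_, ?_, rfl⟩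
  · rw [hnorm, smul_apply, norm_smul, norm_mul, RCLike.norm_conj, hgd,
      RCLike.norm_ofReal, abs_of_pos hs, div_le_iff₀ (by positivity)] at hmem
    nlinarith [norm_nonneg (g (T (p + s • d) - T p))]
  · rintro r ⟨x, y, f, hxy, -, hf, rfl⟩
    exact hT.norm_apply_sub_div_le_lipSemi hxy hf
  · intro h0; rw [h0, sub_self, norm_zero] at hnorm; exact hs.ne hnorm
  · rw [hhd, RCLike.ofReal_re, hh, hnorm]; ring
  · rw [hh, hnorm]; ring

end LipschitzNumericalRadius

lemma convex_setOf_norm_sub_le {X E : Type*} [AddCommGroup X] [Module ℝ X]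
    [SeminormedAddCommGroup E] (Φ : X → E) (K : ℝ) :
    Convex ℝ {c : X | ∀ p (D : ℝ), 0 ≤ D → ‖Φ (p + D • c) - Φ p‖ ≤ D * K} := by
  intro c₁ h₁ c₂ h₂ a b ha hb hab p D hD
  have hsplit : p + D • (a • c₁ + b • c₂) = (p + (D * a) • c₁) + (D * b) • c₂ := by
    rw [smul_add, smul_smul, smul_smul, add_assoc]
  calc ‖Φ (p + D • (a • c₁ + b • c₂)) - Φ p‖
      ≤ ‖Φ (p + (D * a) • c₁ + (D * b) • c₂) - Φ (p + (D * a) • c₁)‖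
        + ‖Φ (p + (D * a) • c₁) - Φ p‖ := by
          rw [hsplit]; exact norm_sub_le_norm_sub_add_norm_sub _ _ _
    _ ≤ D * b * K + D * a * K :=
        add_le_add (h₂ _ _ (mul_nonneg hD hb)) (h₁ _ _ (mul_nonneg hD ha))
    _ = D * K := by rw [← add_mul, ← mul_add, add_comm, hab, mul_one]

lemma convexHull_subset_cthickening_convexHull {E : Type*} [SeminormedAddCommGroup E]
    [NormedSpace ℝ E] {s t : Set E} {δ : ℝ} (h : s ⊆ cthickening δ t) :
    convexHull ℝ s ⊆ cthickening δ (convexHull ℝ t) :=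
  convexHull_min (h.trans (cthickening_subset_of_subset δ (subset_convexHull ℝ t)))
    ((convex_convexHull ℝ t).cthickening δ)

section Lush

variable {𝕜 X : Type*} [RCLike 𝕜] [NormedAddCommGroup X] [NormedSpace 𝕜 X] [NormedSpace ℝ X]
  [IsScalarTower ℝ 𝕜 X] {T : X → X} {C : NNReal}

def normingDirections (f : StrongDual 𝕜 X) (η : ℝ) : Set X :=
  {d | ‖d‖ = 1 ∧ ∃ g : StrongDual 𝕜 X, ‖g‖ = 1 ∧ ‖g d‖ = 1 ∧ ‖g - f‖ ≤ η}

lemma LipschitzWith.normingDirections_subset (hT : LipschitzWith C T) (f : StrongDual 𝕜 X)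
    (η : ℝ) : normingDirections f η ⊆ {c | ∀ p (D : ℝ), 0 ≤ D →
      ‖f (T (p + D • c)) - f (T p)‖ ≤ D * (lipNumRadius 𝕜 T + η * lipSemi T)} := by
  rintro d ⟨hd, g, hg, hgd, hgf⟩ p D hD
  set v := T (p + D • d) - T p
  have hv : ‖v‖ ≤ lipSemi T * D := by
    have := hT.norm_sub_le_lipSemi_mul (p + D • d) p
    rwa [add_sub_cancel_left, norm_smul, hd, mul_one, Real.norm_of_nonneg hD] at this
  have hfv : ‖f v - g v‖ ≤ η * (lipSemi T * D) := by
    rw [norm_sub_rev, ← sub_apply]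
    exact ((g - f).le_opNorm v).trans (mul_le_mul hgf hv (norm_nonneg v)
      ((norm_nonneg _).trans hgf))
  rw [← map_sub]
  calc ‖f v‖ ≤ ‖g v‖ + ‖f v - g v‖ := norm_le_insert' _ _
    _ ≤ D * lipNumRadius 𝕜 T + η * (lipSemi T * D) :=
        add_le_add (hT.norm_apply_sub_le_mul_lipNumRadius hg hd hgd p hD) hfv
    _ = D * (lipNumRadius 𝕜 T + η * lipSemi T) := by ring

lemma LipschitzWith.norm_apply_sub_le_of_mem_convexHull (hT : LipschitzWith C T)
    {f : StrongDual 𝕜 X} {η : ℝ} {c : X} (hc : c ∈ convexHull ℝ (normingDirections f η))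
    (p : X) {D : ℝ} (hD : 0 ≤ D) :
    ‖f (T (p + D • c)) - f (T p)‖ ≤ D * (lipNumRadius 𝕜 T + η * lipSemi T) :=
  convexHull_min (hT.normingDirections_subset f η)
    (convex_setOf_norm_sub_le (fun x => f (T x)) _) hc p D hD

lemma circleSmul_sphereSlice_subset_cthickening [CompleteSpace X] {f : StrongDual 𝕜 X}
    (hf : ‖f‖ ≤ 1) {ε c : ℝ} (hεc : ε < c) :
    circleSmul 𝕜 (sphereSlice 𝕜 f ε) ⊆ cthickening (2 * ε / c) (normingDirections f c) := by
  rintro _ ⟨θ, z, hθ, ⟨hz, hfz⟩, rfl⟩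
  obtain ⟨g, y, hg, hy, hgy, hgf, hyz⟩ := exists_norming_pair_near hf hz (by linarith) hεc
  refine mem_cthickening_of_dist_le _ (θ • y) _ _ ⟨by rw [norm_smul, hθ, hy, one_mul], g, hg,
    by rw [map_smul, smul_eq_mul, norm_mul, hθ, hgy, norm_one, mul_one], hgf⟩ ?_
  rwa [dist_eq_norm, ← smul_sub, norm_smul, hθ, one_mul, norm_sub_rev]

lemma Lush.exists_mem_convexHull_normingDirections [CompleteSpace X] (hX : Lush 𝕜 X) {u w : X}
    (hu : ‖u‖ = 1) (hw : ‖w‖ = 1) {ε : ℝ} (hε : 0 < ε) (hε1 : ε < 1) :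
    ∃ f : StrongDual 𝕜 X, ‖f‖ = 1 ∧ 1 - ε < RCLike.re (f w) ∧
      ∃ c ∈ convexHull ℝ (normingDirections f √ε), ‖u - c‖ < ε + 3 * √ε := by
  obtain ⟨f, hf, ⟨-, hfw⟩, hdist⟩ := hX u w hu hw ε hε
  have hne : (convexHull ℝ (circleSmul 𝕜 (sphereSlice 𝕜 f ε))).Nonempty :=
    ⟨w, subset_convexHull ℝ _ ⟨1, w, norm_one, ⟨hw, hfw⟩, (one_smul 𝕜 w).symm⟩⟩
  obtain ⟨c₀, hc₀, huc₀⟩ := (infDist_lt_iff hne).1 hdist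
  have hsε : 0 < √ε := Real.sqrt_pos.2 hε
  have hεs : ε < √ε := (Real.lt_sqrt hε.le).2 (by nlinarith)
  have hc₀' := convexHull_subset_cthickening_convexHull
    (circleSmul_sphereSlice_subset_cthickening hf.le hεs) hc₀
  rw [mul_div_assoc, Real.div_sqrt] at hc₀'
  obtain ⟨c, hc, hc₀c⟩ := mem_thickening_iff.1 <|
    cthickening_subset_thickening' (by positivity) (by linarith : 2 * √ε < 3 * √ε) _ hc₀'
  exact ⟨f, hf, hfw, c, hc, by rw [← dist_eq_norm]; linarith [dist_triangle u c₀ c]⟩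

lemma Lush.norm_sub_mul_one_sub_le [CompleteSpace X] (hX : Lush 𝕜 X) (hT : LipschitzWith C T)
    (x₁ x₂ : X) {ε : ℝ} (hε : 0 < ε) (hε1 : ε < 1) :
    ‖T x₁ - T x₂‖ * (1 - ε) ≤
      ‖x₁ - x₂‖ * (lipNumRadius 𝕜 T + lipSemi T * (ε + 4 * √ε)) := by
  have hv := lipNumRadius_nonneg (𝕜 := 𝕜) T
  have hL := lipSemi_nonneg T
  rcases eq_or_ne (T x₁) (T x₂) with hTx | hTx
  · rw [hTx, sub_self, norm_zero, zero_mul]; positivity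
  have hx : x₁ ≠ x₂ := fun h => hTx (h ▸ rfl)
  set D := ‖x₁ - x₂‖
  set N := ‖T x₁ - T x₂‖
  set u := NormedSpace.normalize (x₁ - x₂)
  obtain ⟨f, hf, hfw, c, hc, huc⟩ := hX.exists_mem_convexHull_normingDirections
    (NormedSpace.norm_normalize_eq_one_iff.2 (sub_ne_zero.2 hx))
    (NormedSpace.norm_normalize_eq_one_iff.2 (sub_ne_zero.2 hTx)) hε hε1
  have hfN : N * (1 - ε) ≤ ‖f (T x₁) - f (T x₂)‖ := by
    have hre : RCLike.re (f (T x₁ - T x₂)) =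
        N * RCLike.re (f (NormedSpace.normalize (T x₁ - T x₂))) := by
      conv_lhs => rw [← NormedSpace.norm_smul_normalize (T x₁ - T x₂)]
      rw [ContinuousLinearMap.map_smul_of_tower, RCLike.smul_re]
    rw [← map_sub]
    nlinarith [RCLike.re_le_norm (f (T x₁ - T x₂)), norm_nonneg (T x₁ - T x₂)]
  have hrest : ‖f (T x₁) - f (T (x₂ + D • c))‖ ≤ D * (lipSemi T * (ε + 3 * √ε)) := by
    have hx₁ : x₁ - (x₂ + D • c) = D • (u - c) := by
      rw [smul_sub, NormedSpace.norm_smul_normalize]; abel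
    rw [← map_sub]
    calc ‖f (T x₁ - T (x₂ + D • c))‖ ≤ ‖T x₁ - T (x₂ + D • c)‖ :=
          (f.le_opNorm _).trans (by rw [hf, one_mul])
      _ ≤ lipSemi T * (D * ‖u - c‖) := by
          have := hT.norm_sub_le_lipSemi_mul x₁ (x₂ + D • c)
          rwa [hx₁, norm_smul, Real.norm_of_nonneg (norm_nonneg _)] at this
      _ ≤ D * (lipSemi T * (ε + 3 * √ε)) := by
          nlinarith [mul_le_mul_of_nonneg_left huc.le (mul_nonneg hL (norm_nonneg (x₁ - x₂)))]
  calc N * (1 - ε) ≤ ‖f (T x₁) - f (T x₂)‖ := hfN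
    _ ≤ ‖f (T x₁) - f (T (x₂ + D • c))‖ + ‖f (T (x₂ + D • c)) - f (T x₂)‖ :=
        norm_sub_le_norm_sub_add_norm_sub _ _ _
    _ ≤ D * (lipSemi T * (ε + 3 * √ε)) + D * (lipNumRadius 𝕜 T + √ε * lipSemi T) :=
        add_le_add hrest (hT.norm_apply_sub_le_of_mem_convexHull hc x₂ (norm_nonneg _))
    _ = D * (lipNumRadius 𝕜 T + lipSemi T * (ε + 4 * √ε)) := by ring

lemma Lush.norm_sub_le_mul_lipNumRadius [CompleteSpace X] (hX : Lush 𝕜 X)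
    (hT : LipschitzWith C T) (x₁ x₂ : X) :
    ‖T x₁ - T x₂‖ ≤ ‖x₁ - x₂‖ * lipNumRadius 𝕜 T := by
  set R : ℝ → ℝ := fun ε => ‖x₁ - x₂‖ * (lipNumRadius 𝕜 T + lipSemi T * (ε + 4 * √ε))
    - ‖T x₁ - T x₂‖ * (1 - ε)
  have hlim : Tendsto R (𝓝[>] 0) (𝓝 (R 0)) :=
    ((by fun_prop : Continuous R).tendsto 0).mono_left nhdsWithin_le_nhds
  have hev : ∀ᶠ ε in 𝓝[>] 0, 0 ≤ R ε := by
    filter_upwards [Ioo_mem_nhdsGT one_pos] with ε hε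
    linarith [hX.norm_sub_mul_one_sub_le hT x₁ x₂ hε.1 hε.2]
  have h0 := ge_of_tendsto hlim hev
  simp only [R, Real.sqrt_zero] at h0
  linarith

theorem Lush.lipNumRadius_eq_lipSemi [CompleteSpace X] (hX : Lush 𝕜 X) (hT : LipschitzWith C T) :
    lipNumRadius 𝕜 T = lipSemi T := by
  refine le_antisymm hT.lipNumRadius_le_lipSemi (Real.sSup_le ?_ (lipNumRadius_nonneg T))
  rintro r ⟨x₁, x₂, -, rfl⟩
  exact div_le_of_le_mul₀ (norm_nonneg _) (lipNumRadius_nonneg T)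
    (by rw [mul_comm]; exact hX.norm_sub_le_mul_lipNumRadius hT x₁ x₂)

end Lush

lemma lipNumIndex_eq_one_of_lipNumRadius_eq_lipSemi {𝕜 X : Type*} [RCLike 𝕜] [NormedAddCommGroup X]
    [NormedSpace 𝕜 X] [Nontrivial X]
    (h : ∀ T : X → X, (∃ C, LipschitzWith C T) → lipNumRadius 𝕜 T = lipSemi T) :
    lipNumIndex 𝕜 X = 1 := by
  have : {r : ℝ | ∃ T : X → X, (∃ C, LipschitzWith C T) ∧ lipSemi T = 1 ∧
      r = lipNumRadius 𝕜 T} = {1} := by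
    ext r
    constructor
    · rintro ⟨T, hT, hT1, rfl⟩
      rw [h T hT, hT1, mem_singleton_iff]
    · rintro rfl
      exact ⟨id, ⟨1, LipschitzWith.id⟩, lipSemi_id, by rw [h id ⟨1, LipschitzWith.id⟩, lipSemi_id]⟩
  rw [lipNumIndex, this, csInf_singleton]

/-- A complex lush Banach space has Lipschitz numerical index 1; equivalently, every
Lipschitz map on it has numerical radius equal to its Lipschitz seminorm. -/
theorem lipNumIndex_eq_one_of_lush_complex {X : Type*} [NormedAddCommGroup X]
    [NormedSpace ℂ X] [CompleteSpace X] [Nontrivial X] (h : Lush ℂ X) :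
    lipNumIndex ℂ X = 1 ∧
      ∀ T : X → X, (∃ C, LipschitzWith C T) → lipNumRadius ℂ T = lipSemi T := by
  have hv : ∀ T : X → X, (∃ C, LipschitzWith C T) → lipNumRadius ℂ T = lipSemi T :=
    fun _ ⟨_, hT⟩ => h.lipNumRadius_eq_lipSemi hT
  exact ⟨lipNumIndex_eq_one_of_lipNumRadius_eq_lipSemi hv, hv⟩
end

section
/- Let X be a lush Banach space (real or complex). Then for every x, y ∈ S_X and every ε > 0 there is y* ∈ S_{X*} such that y ∈ S(S_X, Re y*, ε) and x belongs to the closed convex hull of 𝕋·S(S_X, Re y*, ε). -/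
open Set Metric Topology

/-!
Iterate lushness. Put `σ₀ = y` and, at stage `r`, apply lushness to `x` and `σ_r / ‖σ_r‖` with a
tiny `δ_r`: this gives a norm-one `g_r` almost norming `σ_r`, and rotations `θᵢ wᵢ` of points of
the slice `S(g_r, δ_r)` whose convex combination is `δ_r`-close to `x`; then put
`σ_{r+1} = σ_r + 2^{r+1} ∑ μᵢ wᵢ`. As `g_r` almost norms all of `σ_r`, it almost attains its norm
on every earlier average `∑ μᵢ wᵢ`, with a defect divided by the weight of that average, and a
weak* cluster point `F` of the `g_r` inherits these bounds. So at stage `r` all but a mass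
`O(2^{-r})` of the `wᵢ` lie in the slice of `F / ‖F‖`, and discarding them approximates `x` by
points of `conv 𝕋 S(F / ‖F‖, ε)`.
-/

open Filter RCLike

section Rotations

variable {𝕜 X : Type*} [RCLike 𝕜] [NormedAddCommGroup X] [NormedSpace 𝕜 X]

theorem re_apply_le_norm {f : X →L[𝕜] 𝕜} (hf : ‖f‖ ≤ 1) (z : X) : re (f z) ≤ ‖z‖ :=
  calc re (f z) ≤ ‖f z‖ := re_le_norm _
    _ ≤ ‖f‖ * ‖z‖ := f.le_opNorm z
    _ ≤ ‖z‖ := mul_le_of_le_one_left (norm_nonneg z) hf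

theorem one_sub_re_apply_nonneg {f : X →L[𝕜] 𝕜} (hf : ‖f‖ ≤ 1) {z : X} (hz : ‖z‖ ≤ 1) :
    0 ≤ 1 - re (f z) :=
  sub_nonneg.2 ((re_apply_le_norm hf z).trans hz)

theorem ContinuousLinearMap.exists_norm_eq_one_re_apply_eq {f : X →L[𝕜] 𝕜} (hf : f ≠ 0) :
    ∃ g : X →L[𝕜] 𝕜, ‖g‖ = 1 ∧ ∀ z, re (f z) = ‖f‖ * re (g z) := by
  refine ⟨(‖f‖⁻¹ : 𝕜) • f, norm_smul_inv_norm hf, fun z => ?_⟩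
  rw [smul_apply, smul_eq_mul, ← ofReal_inv, re_ofReal_mul,
    mul_inv_cancel_left₀ (norm_ne_zero_iff.2 hf)]

theorem sphereSlice_mono {f : X →L[𝕜] 𝕜} {ε ε' : ℝ} (h : ε ≤ ε') :
    sphereSlice 𝕜 f ε ⊆ sphereSlice 𝕜 f ε' :=
  fun _ hz => ⟨hz.1, by linarith [hz.2]⟩

theorem circleSmul_mono {S T : Set X} (h : S ⊆ T) : circleSmul 𝕜 S ⊆ circleSmul 𝕜 T :=
  fun _ ⟨θ, z, hθ, hz, hw⟩ => ⟨θ, z, hθ, h hz, hw⟩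

theorem circleSmul_subset_sphere {S : Set X} (hS : S ⊆ sphere 0 1) :
    circleSmul 𝕜 S ⊆ sphere 0 1 := by
  rintro _ ⟨θ, z, hθ, hz, rfl⟩
  simpa [norm_smul, hθ] using hS hz

variable (𝕜) in
/-- Convex combinations of these pairs remember the unrotated average `∑ μᵢ wᵢ` alongside the
rotated one `∑ μᵢ θᵢ wᵢ`. -/
def circleSmulPairs (S : Set X) : Set (X × X) :=
  {p | ∃ θ : 𝕜, ‖θ‖ = 1 ∧ p.2 ∈ S ∧ p.1 = θ • p.2}

theorem fst_image_circleSmulPairs (S : Set X) :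
    Prod.fst '' circleSmulPairs 𝕜 S = circleSmul 𝕜 S := by
  ext v
  constructor
  · rintro ⟨p, ⟨θ, hθ, hp, hpv⟩, rfl⟩
    exact ⟨θ, p.2, hθ, hp, hpv⟩
  · rintro ⟨θ, w, hθ, hw, rfl⟩
    exact ⟨(θ • w, w), ⟨θ, hθ, hw, rfl⟩, rfl⟩

theorem circleSmulPairs_subset_prod (S : Set X) :
    circleSmulPairs 𝕜 S ⊆ circleSmul 𝕜 S ×ˢ S :=
  fun p ⟨θ, hθ, hp, hpv⟩ => ⟨⟨θ, p.2, hθ, hp, hpv⟩, hp⟩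

theorem circleSmulPairs_mono {S T : Set X} (h : S ⊆ T) :
    circleSmulPairs 𝕜 S ⊆ circleSmulPairs 𝕜 T :=
  fun _ ⟨θ, hθ, hp, hpv⟩ => ⟨θ, hθ, h hp, hpv⟩

theorem circleSmulPairs_union (S T : Set X) :
    circleSmulPairs 𝕜 (S ∪ T) = circleSmulPairs 𝕜 S ∪ circleSmulPairs 𝕜 T := by
  ext p
  constructor
  · rintro ⟨θ, hθ, hS | hT, hp⟩
    exacts [Or.inl ⟨θ, hθ, hS, hp⟩, Or.inr ⟨θ, hθ, hT, hp⟩]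
  · rintro (⟨θ, hθ, hS, hp⟩ | ⟨θ, hθ, hT, hp⟩)
    exacts [⟨θ, hθ, Or.inl hS, hp⟩, ⟨θ, hθ, Or.inr hT, hp⟩]

end Rotations

section ConvexHulls

variable {𝕜 X : Type*} [RCLike 𝕜] [NormedAddCommGroup X] [NormedSpace 𝕜 X] [NormedSpace ℝ X]

theorem convexHull_circleSmulPairs_subset (S : Set X) :
    convexHull ℝ (circleSmulPairs 𝕜 S) ⊆ convexHull ℝ (circleSmul 𝕜 S) ×ˢ convexHull ℝ S :=
  convexHull_min ((circleSmulPairs_subset_prod S).trans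
      (prod_mono (subset_convexHull ℝ _) (subset_convexHull ℝ _)))
    ((convex_convexHull ℝ _).prod (convex_convexHull ℝ _))

theorem exists_mem_convexHull_circleSmulPairs {S : Set X} {v : X}
    (hv : v ∈ convexHull ℝ (circleSmul 𝕜 S)) :
    ∃ b, (v, b) ∈ convexHull ℝ (circleSmulPairs 𝕜 S) := by
  have h := (LinearMap.fst ℝ X X).image_convexHull (circleSmulPairs 𝕜 S)
  rw [LinearMap.coe_fst, fst_image_circleSmulPairs] at h
  rw [← h] at hv
  obtain ⟨p, hp, rfl⟩ := hv
  exact ⟨p.2, hp⟩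

theorem convexHull_circleSmulPairs_subset_closedBall {S : Set X} (hS : S ⊆ sphere 0 1) :
    convexHull ℝ (circleSmulPairs 𝕜 S) ⊆ closedBall 0 1 ×ˢ closedBall 0 1 :=
  (convexHull_circleSmulPairs_subset S).trans <| prod_mono
    ((convex_closedBall 0 1).convexHull_subset_iff.2
      ((circleSmul_subset_sphere hS).trans sphere_subset_closedBall))
    ((convex_closedBall 0 1).convexHull_subset_iff.2 (hS.trans sphere_subset_closedBall))

variable [IsScalarTower ℝ 𝕜 X]

theorem ContinuousLinearMap.isLinearMap_re_apply (f : X →L[𝕜] 𝕜) :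
    IsLinearMap ℝ fun z => re (f z) :=
  ⟨fun z w => by simp only [map_add], fun c z => by
    rw [f.map_smul_of_tower, smul_re, smul_eq_mul]⟩

theorem ContinuousLinearMap.re_apply_smul_add_smul (f : X →L[𝕜] 𝕜) (a b : ℝ) (z w : X) :
    re (f (a • z + b • w)) = a * re (f z) + b * re (f w) := by
  rw [map_add, map_add, f.map_smul_of_tower, f.map_smul_of_tower, smul_re, smul_re]

theorem convexHull_sphereSlice_subset (f : X →L[𝕜] 𝕜) (δ : ℝ) :
    convexHull ℝ (sphereSlice 𝕜 f δ) ⊆ closedBall 0 1 ∩ {z | 1 - δ ≤ re (f z)} :=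
  convexHull_min (fun _ hz => ⟨mem_closedBall_zero_iff.2 hz.1.le, hz.2.le⟩)
    ((convex_closedBall 0 1).inter (convex_halfSpace_ge f.isLinearMap_re_apply _))

/-- Markov's inequality: the pairs whose unrotated point lies outside `A` carry mass at most
`η / ε`, and discarding them moves the rotated average by at most twice that. -/
theorem exists_mem_convexHull_circleSmul_dist_le {F : X →L[𝕜] 𝕜} (hF : ‖F‖ ≤ 1) {A : Set X}
    {ε η : ℝ} (hA : ∀ w, ‖w‖ = 1 → w ∉ A → re (F w) ≤ 1 - ε) {p : X × X}
    (hp : p ∈ convexHull ℝ (circleSmulPairs 𝕜 (sphere 0 1))) (hpF : 1 - η ≤ re (F p.2))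
    (hηε : η < ε) : ∃ v ∈ convexHull ℝ (circleSmul 𝕜 A), dist p.1 v ≤ 2 * η / ε := by
  have hp₀ := hp
  rw [← inter_union_sdiff (sphere (0 : X) 1) A, circleSmulPairs_union] at hp
  set G := circleSmulPairs 𝕜 (sphere (0 : X) 1 ∩ A)
  set B := circleSmulPairs 𝕜 (sphere (0 : X) 1 \ A)
  have hball : ∀ S ⊆ sphere (0 : X) 1, ∀ q ∈ convexHull ℝ (circleSmulPairs 𝕜 S),
      ‖q.1‖ ≤ 1 ∧ ‖q.2‖ ≤ 1 := fun S hS q hq => by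
    simpa using convexHull_circleSmulPairs_subset_closedBall hS hq
  have hG : ∀ q ∈ convexHull ℝ G, q.1 ∈ convexHull ℝ (circleSmul 𝕜 A) :=
    fun q hq => convexHull_mono (circleSmul_mono inter_subset_right)
      (convexHull_circleSmulPairs_subset _ hq).1
  have hB : ∀ q ∈ convexHull ℝ B, re (F q.2) ≤ 1 - ε := fun q hq =>
    convexHull_min (fun w hw => hA w (mem_sphere_zero_iff_norm.1 hw.1) hw.2)
      (convex_halfSpace_le F.isLinearMap_re_apply _) (convexHull_circleSmulPairs_subset _ hq).2
  have hη : 0 ≤ η := by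
    linarith [re_apply_le_norm hF p.2, (hball _ subset_rfl p hp₀).2]
  rcases G.eq_empty_or_nonempty with hG₀ | hG₀
  · rw [hG₀, empty_union] at hp
    linarith [hB p hp]
  rcases B.eq_empty_or_nonempty with hB₀ | hB₀
  · rw [hB₀, union_empty] at hp
    exact ⟨p.1, hG p hp, by rw [dist_self]; exact div_nonneg (by linarith) (by linarith)⟩
  rw [convexHull_union hG₀ hB₀] at hp
  obtain ⟨q, hq, q', hq', a, t, ha, ht, hat, rfl⟩ := mem_convexJoin.1 hp
  have hq₁ := hball _ inter_subset_left q hq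
  have hq'₁ := (hball _ sdiff_subset q' hq').1
  have htε : t * ε ≤ η := by
    have hre : re (F (a • q + t • q').2) = a * re (F q.2) + t * re (F q'.2) :=
      F.re_apply_smul_add_smul a t q.2 q'.2
    nlinarith [re_apply_le_norm hF q.2, hB q' hq']
  refine ⟨q.1, hG q hq, ?_⟩
  have hfst : (a • q + t • q').1 - q.1 = t • (q'.1 - q.1) := by
    obtain rfl : a = 1 - t := by linarith
    simp only [Prod.fst_add, Prod.smul_fst]
    module
  calc dist (a • q + t • q').1 q.1 = t * ‖q'.1 - q.1‖ := by
        rw [dist_eq_norm, hfst, norm_smul, Real.norm_of_nonneg ht]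
    _ ≤ t * 2 := by gcongr; linarith [norm_sub_le q'.1 q.1, hq₁.1]
    _ ≤ 2 * η / ε := by
        rw [le_div_iff₀ (by linarith)]
        linarith

end ConvexHulls

section DyadicSum

open Finset

def dyadicSum {E : Type*} [AddCommMonoid E] [Module ℝ E] (y : E) (b : ℕ → E) (r : ℕ) : E :=
  y + ∑ k ∈ range r, (2 : ℝ) ^ (k + 1) • b k

variable {𝕜 X : Type*} [RCLike 𝕜] [NormedAddCommGroup X] [NormedSpace 𝕜 X] [NormedSpace ℝ X]
  {y : X} {b : ℕ → X}

@[simp]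
theorem dyadicSum_zero : dyadicSum y b 0 = y := by simp [dyadicSum]

theorem dyadicSum_succ (r : ℕ) :
    dyadicSum y b (r + 1) = dyadicSum y b r + (2 : ℝ) ^ (r + 1) • b r := by
  simp only [dyadicSum, sum_range_succ, add_assoc]

theorem norm_dyadicSum_le (hy : ‖y‖ ≤ 1) (hb : ∀ k, ‖b k‖ ≤ 1) (r : ℕ) :
    ‖dyadicSum y b r‖ ≤ 2 ^ (r + 1) - 1 := by
  induction r with
  | zero => norm_num [hy]
  | succ r ih =>
    calc ‖dyadicSum y b (r + 1)‖ ≤ ‖dyadicSum y b r‖ + 2 ^ (r + 1) * ‖b r‖ := by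
          rw [dyadicSum_succ]
          refine (norm_add_le _ _).trans_eq ?_
          rw [norm_smul, Real.norm_of_nonneg (by positivity)]
      _ ≤ 2 ^ (r + 1) - 1 + 2 ^ (r + 1) * 1 := by gcongr; exact hb r
      _ = 2 ^ (r + 1 + 1) - 1 := by ring

variable [IsScalarTower ℝ 𝕜 X]

theorem re_apply_dyadicSum_succ (G : X →L[𝕜] 𝕜) (r : ℕ) :
    re (G (dyadicSum y b (r + 1))) = re (G (dyadicSum y b r)) + 2 ^ (r + 1) * re (G (b r)) := by
  rw [dyadicSum_succ, map_add, G.map_smul_of_tower, map_add, smul_re]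

theorem sub_re_apply_dyadicSum (G : X →L[𝕜] 𝕜) (r : ℕ) :
    2 ^ (r + 1) - 1 - re (G (dyadicSum y b r))
      = (1 - re (G y)) + ∑ k ∈ range r, 2 ^ (k + 1) * (1 - re (G (b k))) := by
  induction r with
  | zero => norm_num
  | succ r ih =>
    rw [re_apply_dyadicSum_succ, sum_range_succ, ← add_assoc, ← ih]
    ring

theorem sub_re_apply_dyadicSum_mono {G : X →L[𝕜] 𝕜} (hG : ‖G‖ ≤ 1) (hb : ∀ k, ‖b k‖ ≤ 1)
    {r n : ℕ} (h : r ≤ n) :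
    2 ^ (r + 1) - 1 - re (G (dyadicSum y b r)) ≤ 2 ^ (n + 1) - 1 - re (G (dyadicSum y b n)) := by
  rw [sub_re_apply_dyadicSum, sub_re_apply_dyadicSum]
  have := sum_le_sum_of_subset_of_nonneg (range_mono h) fun k _ _ =>
    mul_nonneg (pow_nonneg zero_le_two (k + 1)) (one_sub_re_apply_nonneg hG (hb k))
  linarith

theorem le_of_sub_re_apply_dyadicSum_le {G : X →L[𝕜] 𝕜} (hG : ‖G‖ ≤ 1) (hy : ‖y‖ ≤ 1)
    (hb : ∀ k, ‖b k‖ ≤ 1) {κ : ℝ} (h : ∀ r, 2 ^ (r + 1) - 1 - re (G (dyadicSum y b r)) ≤ κ) :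
    1 - re (G y) ≤ κ ∧ ∀ r, 2 ^ (r + 1) * (1 - re (G (b r))) ≤ κ := by
  refine ⟨by have := h 0; norm_num at this; linarith, fun r => ?_⟩
  have := h (r + 1)
  rw [sub_re_apply_dyadicSum] at this
  linarith [one_sub_re_apply_nonneg hG hy, single_le_sum (fun k _ =>
    mul_nonneg (pow_nonneg zero_le_two (k + 1)) (one_sub_re_apply_nonneg hG (hb k)))
    (self_mem_range_succ r)]

theorem sub_re_apply_dyadicSum_le {g : ℕ → X →L[𝕜] 𝕜} {δ : ℕ → ℝ} (hy : ‖y‖ = 1)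
    (hb : ∀ k, ‖b k‖ ≤ 1) (hδ : ∀ k, 0 ≤ δ k) (hg : ∀ k, ‖g k‖ ≤ 1)
    (hgσ : ∀ k, (1 - δ k) * ‖dyadicSum y b k‖ ≤ re (g k (dyadicSum y b k)))
    (hgb : ∀ k, 1 - δ k ≤ re (g k (b k))) (r : ℕ) :
    2 ^ (r + 1) - 1 - re (g r (dyadicSum y b r)) ≤ ∑ k ∈ range (r + 1), 2 ^ (k + 2) * δ k := by
  have hσ := norm_dyadicSum_le hy.le hb
  -- `g r` bounds `‖dyadicSum y b (r + 1)‖` from below, so the norm deficit of the dyadic sum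
  -- grows by at most `2^(r+2) δ r` per step.
  have hdefect : ∀ r,
      2 ^ (r + 1) - 1 - ‖dyadicSum y b r‖ ≤ ∑ k ∈ range r, 2 ^ (k + 2) * δ k := by
    intro r
    induction r with
    | zero => norm_num [hy]
    | succ r ih =>
      have hnorm := re_apply_le_norm (hg r) (dyadicSum y b (r + 1))
      rw [re_apply_dyadicSum_succ] at hnorm
      have hb' := mul_le_mul_of_nonneg_left (hgb r) (pow_nonneg zero_le_two (r + 1))
      have hσ' := mul_le_mul_of_nonneg_left (hσ r) (hδ r)
      rw [sum_range_succ, pow_succ 2 (r + 1)]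
      linarith [hgσ r, hδ r]
  have hσ' := mul_le_mul_of_nonneg_left (hσ r) (hδ r)
  rw [sum_range_succ, pow_succ 2 (r + 1)]
  linarith [hdefect r, hgσ r, hδ r, mul_nonneg (hδ r) (pow_nonneg zero_le_two (r + 1))]

end DyadicSum

section WeakStar

variable {𝕜 X : Type*} [RCLike 𝕜] [NormedAddCommGroup X] [NormedSpace 𝕜 X]

/-- Banach–Alaoglu: a weak* cluster point of `g` inherits every inequality that holds
eventually along `l`. -/
theorem exists_norm_le_one_forall_le_re {ι J : Type*} {l : Filter ι} [l.NeBot]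
    {g : ι → X →L[𝕜] 𝕜} (hg : ∀ i, ‖g i‖ ≤ 1) {a : J → X} {c : J → ℝ}
    (h : ∀ j, ∀ᶠ i in l, c j ≤ re (g i (a j))) :
    ∃ F : X →L[𝕜] 𝕜, ‖F‖ ≤ 1 ∧ ∀ j, c j ≤ re (F (a j)) := by
  obtain ⟨F, hF, hFg⟩ := (WeakDual.isCompact_closedBall (0 : StrongDual 𝕜 X) 1).exists_mapClusterPt
    (u := fun i => StrongDual.toWeakDual (g i)) (f := l)
    (tendsto_principal.2 (Eventually.of_forall fun i => by simpa using hg i))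
  refine ⟨WeakDual.toStrongDual F, by simpa using hF, fun j => ?_⟩
  have hclosed : IsClosed {G : WeakDual 𝕜 X | c j ≤ re (G (a j))} :=
    isClosed_le continuous_const (continuous_re.comp (WeakDual.eval_continuous (a j)))
  exact hclosed.closure_subset (hFg.mem_closure_of_mem _ (h j))

end WeakStar

namespace Lush

variable {𝕜 X : Type*} [RCLike 𝕜] [NormedAddCommGroup X] [NormedSpace 𝕜 X]
  [NormedSpace ℝ X] [IsScalarTower ℝ 𝕜 X]

theorem exists_almost_norming_near (h : Lush 𝕜 X) {x : X} (hx : ‖x‖ = 1) (σ : X) {δ : ℝ}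
    (hδ : 0 < δ) :
    ∃ f : X →L[𝕜] 𝕜, ‖f‖ = 1 ∧ (1 - δ) * ‖σ‖ ≤ re (f σ) ∧
      ∃ p ∈ convexHull ℝ (circleSmulPairs 𝕜 (sphereSlice 𝕜 f δ)), dist x p.1 < δ := by
  obtain ⟨u, hu, hσu⟩ : ∃ u : X, ‖u‖ = 1 ∧ ‖σ‖ • u = σ := by
    rcases eq_or_ne σ 0 with rfl | hσ
    · exact ⟨x, hx, by simp⟩
    · exact ⟨‖σ‖⁻¹ • σ, by simp [norm_smul, hσ], smul_inv_smul₀ (norm_ne_zero_iff.2 hσ) σ⟩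
  obtain ⟨f, hf, hfu, hdist⟩ := h x u hx hu δ hδ
  have hu_mem : u ∈ convexHull ℝ (circleSmul 𝕜 (sphereSlice 𝕜 f δ)) :=
    subset_convexHull ℝ _ ⟨1, u, norm_one, hfu, (one_smul 𝕜 u).symm⟩
  obtain ⟨v, hv, hxv⟩ := (infDist_lt_iff ⟨u, hu_mem⟩).1 hdist
  obtain ⟨b, hvb⟩ := exists_mem_convexHull_circleSmulPairs hv
  refine ⟨f, hf, ?_, (v, b), hvb, hxv⟩
  rw [← hσu, f.map_smul_of_tower, smul_re, norm_smul, norm_norm, hu, mul_one, mul_comm]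
  exact mul_le_mul_of_nonneg_left hfu.2.le (norm_nonneg σ)

theorem exists_almost_norming_seq (h : Lush 𝕜 X) {x : X} (hx : ‖x‖ = 1) (y : X) {δ : ℕ → ℝ}
    (hδ : ∀ r, 0 < δ r) :
    ∃ (g : ℕ → X →L[𝕜] 𝕜) (p : ℕ → X × X), ∀ r, ‖g r‖ = 1 ∧
      (1 - δ r) * ‖dyadicSum y (fun k => (p k).2) r‖
        ≤ re (g r (dyadicSum y (fun k => (p k).2) r)) ∧
      p r ∈ convexHull ℝ (circleSmulPairs 𝕜 (sphereSlice 𝕜 (g r) (δ r))) ∧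
      dist x (p r).1 < δ r := by
  choose f hf hfσ P hP hPx using fun σ r => h.exists_almost_norming_near hx σ (hδ r)
  let σ : ℕ → X := fun r => Nat.rec y (fun r s => s + (2 : ℝ) ^ (r + 1) • (P s r).2) r
  have hσ : ∀ r, dyadicSum y (fun k => (P (σ k) k).2) r = σ r := by
    intro r
    induction r with
    | zero => exact dyadicSum_zero
    | succ r ih => rw [dyadicSum_succ, ih]
  refine ⟨fun r => f (σ r) r, fun r => P (σ r) r, fun r => ?_⟩
  simp only [hσ]
  exact ⟨hf _ _, hfσ _ _, hP _ _, hPx _ _⟩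

/-- The weights `2^(k+1)` make the defect of the limit functional on the `r`-th unrotated average
decay like `2^(-r)`, while `δ r = ε / 4^(r+2)` keeps the accumulated defects below `ε / 2`. -/
theorem exists_limit_functional (h : Lush 𝕜 X) {x y : X} (hx : ‖x‖ = 1) (hy : ‖y‖ = 1) {ε : ℝ}
    (hε : 0 < ε) :
    ∃ F : X →L[𝕜] 𝕜, ‖F‖ ≤ 1 ∧ 1 - ε / 2 ≤ re (F y) ∧ ∃ p : ℕ → X × X, ∀ r,
      p r ∈ convexHull ℝ (circleSmulPairs 𝕜 (sphere 0 1)) ∧ dist x (p r).1 < ε / 4 ^ (r + 2) ∧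
      2 ^ (r + 1) * (1 - re (F (p r).2)) ≤ ε / 2 := by
  set δ : ℕ → ℝ := fun r => ε / 4 ^ (r + 2)
  have hδ : ∀ r, 0 < δ r := fun r => by positivity
  obtain ⟨g, p, hgp⟩ := h.exists_almost_norming_seq hx y hδ
  set b : ℕ → X := fun k => (p k).2
  have hb : ∀ r, ‖b r‖ ≤ 1 ∧ 1 - δ r ≤ re (g r (b r)) := fun r => by
    simpa using convexHull_sphereSlice_subset _ _
      (convexHull_circleSmulPairs_subset _ (hgp r).2.2.1).2
  have hgeom : ∀ n, ∑ k ∈ Finset.range n, 2 ^ (k + 2) * δ k ≤ ε / 2 := fun n => by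
    have hk : ∀ k, 2 ^ (k + 2) * δ k = ε / 4 * (1 / 2) ^ k := fun k => by
      have h4 : (4 : ℝ) ^ (k + 2) = 2 ^ (k + 2) * 2 ^ (k + 2) := by rw [← mul_pow]; norm_num
      rw [show δ k = ε / 4 ^ (k + 2) from rfl, h4, one_div_pow]
      field_simp
      ring
    simp only [hk, ← Finset.mul_sum]
    nlinarith [sum_geometric_two_le n]
  have hdefect : ∀ r, 2 ^ (r + 1) - 1 - re (g r (dyadicSum y b r)) ≤ ε / 2 := fun r =>
    (sub_re_apply_dyadicSum_le hy (fun k => (hb k).1) (fun k => (hδ k).le) (fun k => (hgp k).1.le)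
      (fun k => (hgp k).2.1) (fun k => (hb k).2) r).trans (hgeom _)
  obtain ⟨F, hF, hFσ⟩ := exists_norm_le_one_forall_le_re (l := atTop) (fun r => (hgp r).1.le)
    (a := dyadicSum y b) (c := fun r => 2 ^ (r + 1) - 1 - ε / 2) fun r =>
      eventually_atTop.2 ⟨r, fun n hn => by
        linarith [hdefect n,
          sub_re_apply_dyadicSum_mono (y := y) (hgp n).1.le (fun k => (hb k).1) hn]⟩
  obtain ⟨hFy, hFb⟩ := le_of_sub_re_apply_dyadicSum_le hF hy.le (fun k => (hb k).1) (κ := ε / 2)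
    fun r => by linarith [hFσ r]
  refine ⟨F, hF, by linarith, p, fun r => ⟨?_, (hgp r).2.2.2, hFb r⟩⟩
  exact convexHull_mono (circleSmulPairs_mono fun z hz => mem_sphere_zero_iff_norm.2 hz.1)
    (hgp r).2.2.1

theorem exists_mem_closure_of_le_one (h : Lush 𝕜 X) {x y : X} (hx : ‖x‖ = 1) (hy : ‖y‖ = 1)
    {ε : ℝ} (hε : 0 < ε) (hε1 : ε ≤ 1) :
    ∃ f : X →L[𝕜] 𝕜, ‖f‖ = 1 ∧ y ∈ sphereSlice 𝕜 f ε ∧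
      x ∈ closure (convexHull ℝ (circleSmul 𝕜 (sphereSlice 𝕜 f ε))) := by
  obtain ⟨F, hF, hFy, p, hp⟩ := h.exists_limit_functional hx hy hε
  have hF0 : F ≠ 0 := by
    rintro rfl
    simp only [zero_apply, map_zero] at hFy
    linarith
  obtain ⟨f, hf, hre⟩ := F.exists_norm_eq_one_re_apply_eq hF0
  have hFpos : 0 < ‖F‖ := norm_pos_iff.2 hF0
  have hA : ∀ w, ‖w‖ = 1 → w ∉ sphereSlice 𝕜 f ε → re (F w) ≤ 1 - ε := fun w hw hwA => by
    have hfw : re (f w) ≤ 1 - ε := not_lt.1 fun h' => hwA ⟨hw, h'⟩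
    rw [hre]
    linarith [mul_nonneg hFpos.le (sub_nonneg.2 hfw),
      mul_nonneg (sub_nonneg.2 hF) (sub_nonneg.2 hε1)]
  refine ⟨f, hf, ⟨hy, ?_⟩, Metric.mem_closure_iff.2 fun η hη => ?_⟩
  · rw [hre] at hFy
    nlinarith
  obtain ⟨r, hr⟩ := exists_pow_lt_of_lt_one hη one_half_lt_one
  obtain ⟨v, hv, hpv⟩ := exists_mem_convexHull_circleSmul_dist_le hF hA (hp r).1
    (η := ε / 2 ^ (r + 2)) (by
      rw [sub_le_iff_le_add, ← sub_le_iff_le_add', le_div_iff₀ (by positivity), pow_succ]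
      linarith [(hp r).2.2])
    (div_lt_self hε (one_lt_pow₀ one_lt_two (by omega)))
  have hx_near : dist x (p r).1 ≤ 1 / 2 ^ (r + 1) :=
    (hp r).2.1.le.trans <| div_le_div₀ zero_le_one hε1 (by positivity) <|
      (pow_le_pow_right₀ one_le_two (by omega)).trans
        (pow_le_pow_left₀ zero_le_two (by norm_num) _)
  have hpv_eq : 2 * (ε / 2 ^ (r + 2)) / ε = 1 / 2 ^ (r + 1) := by
    field_simp
    ring
  have hhalf : (1 / 2 : ℝ) ^ r = 1 / 2 ^ (r + 1) + 1 / 2 ^ (r + 1) := by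
    rw [one_div_pow]
    field_simp
    ring
  exact ⟨v, hv, by linarith [dist_triangle x (p r).1 v]⟩

end Lush

theorem lush_reformulation_general {𝕜 X : Type*} [RCLike 𝕜] [NormedAddCommGroup X] [NormedSpace 𝕜 X]
    [NormedSpace ℝ X] [IsScalarTower ℝ 𝕜 X]
    (h : Lush 𝕜 X) :
    ∀ x y : X, ‖x‖ = 1 → ‖y‖ = 1 → ∀ ε : ℝ, 0 < ε → ∃ f : X →L[𝕜] 𝕜, ‖f‖ = 1 ∧
      y ∈ sphereSlice 𝕜 f ε ∧
      x ∈ closure (convexHull ℝ (circleSmul 𝕜 (sphereSlice 𝕜 f ε))) := by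
  intro x y hx hy ε hε
  obtain ⟨f, hf, hyf, hxf⟩ :=
    h.exists_mem_closure_of_le_one hx hy (lt_min hε one_pos) (min_le_right ε 1)
  have hslice := sphereSlice_mono (f := f) (min_le_left ε 1)
  exact ⟨f, hf, hslice hyf, closure_mono (convexHull_mono (circleSmul_mono hslice)) hxf⟩

/-- Reformulation of lushness: the point x lies in the closed convex hull of the
rotations of the slice. -/
theorem lush_reformulation {𝕜 X : Type*} [RCLike 𝕜] [NormedAddCommGroup X] [NormedSpace 𝕜 X]
    [NormedSpace ℝ X] [IsScalarTower ℝ 𝕜 X] [CompleteSpace X]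
    (h : Lush 𝕜 X) :
    ∀ x y : X, ‖x‖ = 1 → ‖y‖ = 1 → ∀ ε : ℝ, 0 < ε → ∃ f : X →L[𝕜] 𝕜, ‖f‖ = 1 ∧
      y ∈ sphereSlice 𝕜 f ε ∧
      x ∈ closure (convexHull ℝ (circleSmul 𝕜 (sphereSlice 𝕜 f ε))) :=
  lush_reformulation_general h
end
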